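/- Let q ≥ 3 and n ≥ 3, and let w ∈ A_q(n) ∪ B_q(n). Then every proper suffix v of w satisfies |v|_0 ≥ |v|_1, and every nonempty suffix v of w with |v| < ⌊(n+1)/2⌋ satisfies |v|_0 > |v|_1. -/

import Mathlib

/-- Value of a letter: 1 ↦ +1, 0 ↦ -1, other letters ↦ 0. -/
def mval (a : ℕ) : ℤ := if a = 1 then 1 else if a = 0 then -1 else 0

/-- Value-sum of a word. -/
def vsum (w : List ℕ) : ℤ := (w.map mval).sum

/-- A (q-2)-colored Motzkin word over the alphabet Z_q = {0,...,q-1}: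
all letters < q, every prefix has nonnegative value-sum, total value-sum 0. -/
def IsMotzkinWord (q : ℕ) (w : List ℕ) : Prop :=
  (∀ a ∈ w, a < q) ∧ (∀ u, u <+: w → 0 ≤ vsum u) ∧ vsum w = 0

/-- The set 𝓜_{q-2}(n) of (q-2)-colored Motzkin words of length n. -/
def MotzkinSet (q n : ℕ) : Set (List ℕ) := {w | w.length = n ∧ IsMotzkinWord q w}

/-- M_{q-2}(n), the number of (q-2)-colored Motzkin words of length n. -/
noncomputable def Mnum (q n : ℕ) : ℕ := (MotzkinSet q n).ncard

/-- The set Ê_{q-2}(n) of elevated (q-2)-colored Motzkin words of length n: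
words 1α0 with α ∈ 𝓜_{q-2}(n-2). -/
def ElevatedSet (q n : ℕ) : Set (List ℕ) :=
  {w | w.length = n ∧ ∃ α ∈ MotzkinSet q (n - 2), w = 1 :: (α ++ [0])}

/-- The set A_q(n). -/
def SetA (q n : ℕ) : Set (List ℕ) :=
  {w | ∃ i ≤ n / 2, ∃ α ∈ MotzkinSet q i, ∃ β ∈ ElevatedSet q (n - i), w = α ++ β} \
    {w | ∃ α ∈ ElevatedSet q (n / 2), ∃ β ∈ ElevatedSet q (n / 2), w = α ++ β}

/-- The set B_q(n). -/
def SetB (q n : ℕ) : Set (List ℕ) :=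
  {w | ∃ i ≤ n / 2 - 1, ∃ α ∈ MotzkinSet q i, ∃ β ∈ ElevatedSet q (n - i - 1),
    w = 1 :: (α ++ β)}

/-- The set C_q(n): words γ0 with γ a (q-2)-colored Motzkin word of length n-1
having no factor which is an elevated Motzkin word of length j ≥ ⌈n/2⌉. -/
def SetC (q n : ℕ) : Set (List ℕ) :=
  {w | ∃ γ ∈ MotzkinSet q (n - 1),
    (∀ j, (n + 1) / 2 ≤ j → ∀ β ∈ ElevatedSet q j, ¬ β <:+: γ) ∧ w = γ ++ [0]}

/-- The cross-bifix-free candidate set CBFS_q(n). -/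
def CBFS (q n : ℕ) : Set (List ℕ) := SetA q n ∪ SetB q n ∪ SetC q n

/-- A word is bifix-free if no nonempty proper prefix of it is also a suffix of it. -/
def BifixFree (w : List ℕ) : Prop :=
  ∀ u, u <+: w → u ≠ [] → u.length < w.length → ¬ u <:+ w

/-- BF_q(n): the set of bifix-free words of length n over Z_q. -/
def BF (q n : ℕ) : Set (List ℕ) := {w | w.length = n ∧ (∀ a ∈ w, a < q) ∧ BifixFree w}

/-- F_{k,q}(n): the number of words of length n over Z_q avoiding k consecutive 0's. -/
noncomputable def Fcount (k q n : ℕ) : ℕ :=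
  {w : List ℕ | w.length = n ∧ (∀ a ∈ w, a < q) ∧ ¬ List.replicate k 0 <:+: w}.ncard

/-- The set S_{k,q}(n) of Bajic--Stojanovic--Chee--Kiah type words: words s of length n
over Z_q with s₁ = ⋯ = s_k = 0, s_{k+1} ≠ 0, s_n ≠ 0, and such that the subword
s_{k+2} ⋯ s_{n-1} contains no k consecutive 0's. -/
def SetS (q k n : ℕ) : Set (List ℕ) :=
  {s | s.length = n ∧ (∀ a ∈ s, a < q) ∧ s.take k = List.replicate k 0 ∧
    s.getD k 0 ≠ 0 ∧ s.getLast? ≠ some 0 ∧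
    ¬ List.replicate k 0 <:+: (s.drop (k + 1)).take (n - k - 2)}

/-!
Since `vsum v = |v|₁ - |v|₀`, both claims are sign conditions on `vsum` of suffixes.
A suffix of a Motzkin word has `vsum ≤ 0` (its complementary prefix has `vsum ≥ 0`), and a
nonempty proper suffix of an elevated word `1α0` has `vsum < 0`. A word of `A_q(n)` is `αβ`,
and a proper suffix of a word of `B_q(n)` is a suffix of `αβ`, with `α` Motzkin and `β`
elevated of length at least `⌊(n+1)/2⌋`; so every suffix has `vsum ≤ 0`, and a short
nonempty one is a proper suffix of `β`.
-/

lemma vsum_cons (a : ℕ) (v : List ℕ) : vsum (a :: v) = mval a + vsum v := by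
  simp [vsum]

lemma vsum_append (u v : List ℕ) : vsum (u ++ v) = vsum u + vsum v := by
  simp [vsum]

lemma vsum_eq_count_sub_count (v : List ℕ) : vsum v = v.count 1 - v.count 0 := by
  induction v with
  | nil => rfl
  | cons a v ih =>
    rw [vsum_cons, ih, List.count_cons, List.count_cons, mval]
    split_ifs <;> simp_all <;> omega

lemma count_one_le_count_zero_iff (v : List ℕ) : v.count 1 ≤ v.count 0 ↔ vsum v ≤ 0 := by
  rw [vsum_eq_count_sub_count]; omega

lemma count_one_lt_count_zero_iff (v : List ℕ) : v.count 1 < v.count 0 ↔ vsum v < 0 := by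
  rw [vsum_eq_count_sub_count]; omega

lemma List.IsSuffix.of_cons_of_length_lt {α : Type*} {v l : List α} {a : α}
    (hv : v <:+ a :: l) (hlt : v.length < (a :: l).length) : v <:+ l :=
  (List.suffix_cons_iff.1 hv).resolve_left (by rintro rfl; omega)

lemma List.IsSuffix.suffix_or_eq_append {α : Type*} {v s t : List α} (hv : v <:+ s ++ t) :
    v <:+ t ∨ ∃ u, u <:+ s ∧ v = u ++ t := by
  rcases List.suffix_or_suffix_of_suffix hv (List.suffix_append s t) with h | ⟨u, rfl⟩
  · exact .inl h
  · exact .inr ⟨u, List.suffix_append_self_iff.1 hv, rfl⟩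

lemma vsum_nonpos_of_suffix_append {s t v : List ℕ} (hs : ∀ u, u <:+ s → vsum u ≤ 0)
    (ht : ∀ u, u <:+ t → vsum u ≤ 0) (hv : v <:+ s ++ t) : vsum v ≤ 0 := by
  rcases hv.suffix_or_eq_append with h | ⟨u, hu, rfl⟩
  · exact ht v h
  · rw [vsum_append]; linarith [hs u hu, ht t (List.suffix_refl t)]

lemma IsMotzkinWord.vsum_nonpos_of_suffix {q : ℕ} {α v : List ℕ} (hα : IsMotzkinWord q α)
    (hv : v <:+ α) : vsum v ≤ 0 := by
  obtain ⟨-, hpre, hsum⟩ := hα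
  obtain ⟨u, rfl⟩ := hv
  rw [vsum_append] at hsum
  linarith [hpre u (List.prefix_append u v)]

section Elevated

variable {q m : ℕ} {β v : List ℕ}

lemma vsum_eq_zero_of_mem_elevatedSet (hβ : β ∈ ElevatedSet q m) : vsum β = 0 := by
  obtain ⟨-, α, hα, rfl⟩ := hβ
  rw [vsum_cons, vsum_append, hα.2.2.2]
  rfl

-- A proper suffix of `1 :: (α ++ [0])` is a suffix of `α` followed by the final `0`.
lemma vsum_neg_of_suffix_of_mem_elevatedSet (hβ : β ∈ ElevatedSet q m) (hv : v <:+ β)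
    (hne : v ≠ []) (hlt : v.length < β.length) : vsum v < 0 := by
  obtain ⟨-, α, hα, rfl⟩ := hβ
  rcases List.suffix_concat_iff.1 (hv.of_cons_of_length_lt hlt) with rfl | ⟨u, rfl, hu⟩
  · exact absurd rfl hne
  · rw [vsum_append]
    linarith [hα.2.vsum_nonpos_of_suffix hu, show vsum [0] = -1 from rfl]

lemma vsum_nonpos_of_suffix_of_mem_elevatedSet (hβ : β ∈ ElevatedSet q m) (hv : v <:+ β) :
    vsum v ≤ 0 := by
  rcases eq_or_ne v [] with rfl | hne
  · exact le_rfl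
  rcases hv.length_le.lt_or_eq with hlt | heq
  · exact (vsum_neg_of_suffix_of_mem_elevatedSet hβ hv hne hlt).le
  · rw [hv.eq_of_length heq, vsum_eq_zero_of_mem_elevatedSet hβ]

end Elevated

lemma suffix_counts_of_motzkin_append_elevated {q m k : ℕ} {α β : List ℕ}
    (hα : IsMotzkinWord q α) (hβ : β ∈ ElevatedSet q m) (hk : k ≤ m) :
    (∀ v, v <:+ α ++ β → v.count 1 ≤ v.count 0) ∧
    (∀ v, v <:+ α ++ β → v ≠ [] → v.length < k → v.count 1 < v.count 0) := by
  refine ⟨fun v hv => ?_, fun v hv hne hlt => ?_⟩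
  · rw [count_one_le_count_zero_iff]
    exact vsum_nonpos_of_suffix_append (fun u => hα.vsum_nonpos_of_suffix)
      (fun u => vsum_nonpos_of_suffix_of_mem_elevatedSet hβ) hv
  · have hlt' : v.length < β.length := by rw [hβ.1]; omega
    rw [count_one_lt_count_zero_iff]
    exact vsum_neg_of_suffix_of_mem_elevatedSet hβ
      (List.suffix_of_suffix_length_le hv (List.suffix_append α β) hlt'.le) hne hlt'

theorem setAB_suffix_counts_general (q n : ℕ) (hn : 3 ≤ n)
    (w : List ℕ) (hw : w ∈ SetA q n ∪ SetB q n) :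
    (∀ v, v <:+ w → v.length < w.length → v.count 1 ≤ v.count 0) ∧
    (∀ v, v <:+ w → v ≠ [] → v.length < (n + 1) / 2 → v.count 1 < v.count 0) := by
  rcases hw with ⟨⟨i, hi, α, hα, β, hβ, rfl⟩, -⟩ | ⟨i, hi, α, hα, β, hβ, rfl⟩
  · obtain ⟨hle, hlt⟩ := suffix_counts_of_motzkin_append_elevated hα.2 hβ (k := (n + 1) / 2)
      (by omega)
    exact ⟨fun v hv _ => hle v hv, hlt⟩
  · obtain ⟨hle, hlt⟩ := suffix_counts_of_motzkin_append_elevated hα.2 hβ (k := (n + 1) / 2)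
      (by omega)
    have hlen : (1 :: (α ++ β)).length = n := by
      simp only [List.length_cons, List.length_append, hα.1, hβ.1]; omega
    exact ⟨fun v hv hv' => hle v (hv.of_cons_of_length_lt hv'),
      fun v hv hne hv' => hlt v (hv.of_cons_of_length_lt (by omega)) hne hv'⟩

/-- For w ∈ A_q(n) ∪ B_q(n), every proper suffix v satisfies |v|₀ ≥ |v|₁,
and every nonempty suffix v with |v| < ⌊(n+1)/2⌋ satisfies |v|₀ > |v|₁. -/
theorem setAB_suffix_counts (q n : ℕ) (hq : 3 ≤ q) (hn : 3 ≤ n)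
    (w : List ℕ) (hw : w ∈ SetA q n ∪ SetB q n) :
    (∀ v, v <:+ w → v.length < w.length → v.count 1 ≤ v.count 0) ∧
    (∀ v, v <:+ w → v ≠ [] → v.length < (n + 1) / 2 → v.count 1 < v.count 0) :=
  setAB_suffix_counts_general q n hn w hw
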